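/- Let ω : ℕ → ℕ → ℂ be the weighted adjacency matrix of an infinite weighted digraph and suppose that Σ_{k=1}^∞ |ω_{ik}|² < ∞ for every i ∈ ℕ. Then the weighted adjacency operator Ω is densely defined, the adjoint of Ω₀ equals Γ (in particular Ω* ⊆ Ω₀* = Γ), and Γ is a closed operator. -/

import Mathlib

noncomputable section

open Complex

/-- The Hilbert space `ℓ²(ℕ, ℂ)`. -/
abbrev L2 : Type := lp (fun _ : ℕ => ℂ) 2

/-- The (everywhere-given, possibly junk-valued) formula for the weighted adjacency
operator: `(Ω v) k = ∑' i, v i * ω i k`. -/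
def OmF (ω : ℕ → ℕ → ℂ) (v : ℕ → ℂ) : ℕ → ℂ := fun k => ∑' i, v i * ω i k

/-- The domain of the weighted adjacency operator. -/
def OmDom (ω : ℕ → ℕ → ℂ) : Submodule ℂ L2 where
  carrier := {v : L2 | (∀ k, Summable fun i => (v : ℕ → ℂ) i * ω i k) ∧ Memℓp (OmF ω (v : ℕ → ℂ)) 2}
  zero_mem' := by
    constructor
    · intro k
      simp only [lp.coeFn_zero, Pi.zero_apply, zero_mul]
      exact summable_zero
    · have : OmF ω ((0 : L2) : ℕ → ℂ) = 0 := by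
        funext k
        simp [OmF, lp.coeFn_zero]
      rw [this]
      exact zero_memℓp
  add_mem' := by
    rintro a b ⟨ha1, ha2⟩ ⟨hb1, hb2⟩
    constructor
    · intro k
      have : (fun i => ((a + b : L2) : ℕ → ℂ) i * ω i k)
          = fun i => (a : ℕ → ℂ) i * ω i k + (b : ℕ → ℂ) i * ω i k := by
        funext i
        simp [lp.coeFn_add, add_mul]
      rw [this]
      exact (ha1 k).add (hb1 k)
    · have : OmF ω ((a + b : L2) : ℕ → ℂ) = OmF ω (a : ℕ → ℂ) + OmF ω (b : ℕ → ℂ) := by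
        funext k
        simp only [OmF, Pi.add_apply]
        rw [← Summable.tsum_add (ha1 k) (hb1 k)]
        congr 1
        funext i
        simp [lp.coeFn_add, add_mul]
      rw [this]
      exact ha2.add hb2
  smul_mem' := by
    rintro c a ⟨ha1, ha2⟩
    constructor
    · intro k
      have : (fun i => ((c • a : L2) : ℕ → ℂ) i * ω i k)
          = fun i => c * ((a : ℕ → ℂ) i * ω i k) := by
        funext i
        simp [lp.coeFn_smul, mul_assoc]
      rw [this]
      exact (ha1 k).mul_left c
    · have : OmF ω ((c • a : L2) : ℕ → ℂ) = c • OmF ω (a : ℕ → ℂ) := by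
        funext k
        simp only [OmF, Pi.smul_apply, smul_eq_mul]
        rw [← tsum_mul_left]
        congr 1
        funext i
        simp [lp.coeFn_smul, mul_assoc]
      rw [this]
      exact ha2.const_smul c

theorem mem_OmDom {ω : ℕ → ℕ → ℂ} {v : L2} :
    v ∈ OmDom ω ↔ (∀ k, Summable fun i => (v : ℕ → ℂ) i * ω i k) ∧
      Memℓp (OmF ω (v : ℕ → ℂ)) 2 := Iff.rfl

/-- The underlying linear map of the weighted adjacency operator. -/
def OmLM (ω : ℕ → ℕ → ℂ) : OmDom ω →ₗ[ℂ] L2 where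
  toFun v := ⟨OmF ω ((v : L2) : ℕ → ℂ), (mem_OmDom.mp v.2).2⟩
  map_add' a b := by
    apply Subtype.ext
    funext k
    simp only [lp.coeFn_add, Pi.add_apply]
    show OmF ω (((a : L2) + (b : L2) : L2) : ℕ → ℂ) k = _
    simp only [OmF]
    rw [← Summable.tsum_add ((mem_OmDom.mp a.2).1 k) ((mem_OmDom.mp b.2).1 k)]
    congr 1
    funext i
    simp [lp.coeFn_add, add_mul]
  map_smul' c a := by
    apply Subtype.ext
    funext k
    simp only [lp.coeFn_smul, Pi.smul_apply, RingHom.id_apply, smul_eq_mul]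
    show OmF ω ((c • (a : L2) : L2) : ℕ → ℂ) k = _
    simp only [OmF]
    rw [← tsum_mul_left]
    congr 1
    funext i
    simp [lp.coeFn_smul, mul_assoc]

/-- The weighted adjacency operator `Ω` as an unbounded operator on `ℓ²(ℕ,ℂ)`. -/
def OmegaOp (ω : ℕ → ℕ → ℂ) : L2 →ₗ.[ℂ] L2 := ⟨OmDom ω, OmLM ω⟩

/-- The subspace `D₀` of finitely supported sequences: the span of the standard basis. -/
def finSupp : Submodule ℂ L2 := Submodule.span ℂ (Set.range fun i : ℕ => lp.single 2 i (1 : ℂ))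

end

/-!
The rows of `ω` lie in `ℓ²`, so `Ω δᵢ = ωᵢ` and the finitely supported sequences lie in the
domain of `Ω`, which is therefore dense. Testing `Ω₀* y` against `δᵢ` gives
`(Ω₀* y)ᵢ = ⟪ωᵢ, y⟫ = (Γ y)ᵢ`, so `Ω₀* ≤ Γ`; conversely `⟪Ω₀ δᵢ, y⟫ = ⟪δᵢ, Γ y⟫` makes `Γ` a formal
adjoint of `Ω₀`, so `Γ ≤ Ω₀*`. Being an adjoint, `Γ` is closed, and `Ω₀ ≤ Ω` gives `Ω* ≤ Ω₀*`.
-/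

open scoped ComplexConjugate InnerProductSpace LinearPMap

namespace LinearPMap

variable {𝕜 E F : Type*} [RCLike 𝕜] [NormedAddCommGroup E] [InnerProductSpace 𝕜 E]
  [NormedAddCommGroup F] [InnerProductSpace 𝕜 F]

theorem isFormalAdjoint_of_domain_eq_span {T : E →ₗ.[𝕜] F} {S : F →ₗ.[𝕜] E} {s : Set E}
    (hT : T.domain = Submodule.span 𝕜 s)
    (h : ∀ x : T.domain, (x : E) ∈ s → ∀ y : S.domain, ⟪T x, y⟫_𝕜 = ⟪(x : E), S y⟫_𝕜) :
    T.IsFormalAdjoint S := by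
  rintro ⟨x, hx⟩ y
  have hspan : x ∈ Submodule.span 𝕜 s := hT ▸ hx
  induction hspan using Submodule.span_induction with
  | mem x hxs => exact h ⟨x, hx⟩ hxs y
  | zero =>
    rw [show (⟨0, hx⟩ : T.domain) = 0 from rfl, map_zero, Submodule.coe_zero,
      inner_zero_left, inner_zero_left]
  | add a b ha hb iha ihb =>
    have ha' : a ∈ T.domain := hT ▸ ha
    have hb' : b ∈ T.domain := hT ▸ hb
    rw [show (⟨a + b, hx⟩ : T.domain) = ⟨a, ha'⟩ + ⟨b, hb'⟩ from rfl, map_add,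
      Submodule.coe_add, inner_add_left, inner_add_left, iha ha', ihb hb']
  | smul c a ha iha =>
    have ha' : a ∈ T.domain := hT ▸ ha
    rw [show (⟨c • a, hx⟩ : T.domain) = c • ⟨a, ha'⟩ from rfl, map_smul,
      Submodule.coe_smul, inner_smul_left, inner_smul_left, iha ha']

theorem adjoint_le_adjoint_of_le [CompleteSpace E] {S T : E →ₗ.[𝕜] F}
    (hS : Dense (S.domain : Set E)) (hST : S ≤ T) : T† ≤ S† := by
  have hT : Dense (T.domain : Set E) := hS.mono hST.1
  refine IsFormalAdjoint.le_adjoint hS fun x y => ?_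
  rw [hST.2 (x := x) (y := ⟨x, hST.1 x.2⟩) rfl]
  exact (adjoint_isFormalAdjoint hT).symm _ y

end LinearPMap

theorem memℓp_two_of_summable_sq {ι E : Type*} [NormedAddCommGroup E] {f : ι → E}
    (hf : Summable fun i => ‖f i‖ ^ 2) : Memℓp f 2 :=
  memℓp_gen (by simpa using hf)

theorem summable_mul_of_memℓp_two {ι R : Type*} [NormedRing R] [CompleteSpace R] {f g : ι → R}
    (hf : Memℓp f 2) (hg : Memℓp g 2) : Summable fun i => f i * g i :=
  .of_norm_bounded (lp.summable_mul (by simpa using Real.HolderConjugate.two_two)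
    (⟨f, hf⟩ : lp (fun _ => R) 2) ⟨g, hg⟩) fun i => norm_mul_le _ _

theorem dense_finSupp : Dense (finSupp : Set L2) := by
  intro f
  refine mem_closure_of_tendsto (lp.hasSum_single (by norm_num) f) (.of_forall fun s => ?_)
  refine sum_mem fun i _ => ?_
  have hsingle : lp.single 2 i (f i) = f i • (lp.single 2 i (1 : ℂ) : L2) := by
    rw [← lp.single_smul]
    norm_num
  rw [hsingle]
  exact Submodule.smul_mem _ _ (Submodule.subset_span ⟨i, rfl⟩)

theorem inner_single_one_left (i : ℕ) (f : L2) : ⟪(lp.single 2 i (1 : ℂ) : L2), f⟫_ℂ = f i := by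
  classical
  simp [lp.inner_single_left]

variable {ω : ℕ → ℕ → ℂ}

theorem OmF_single (ω : ℕ → ℕ → ℂ) (i : ℕ) : OmF ω (lp.single 2 i (1 : ℂ) : L2) = ω i := by
  funext k
  rw [OmF, tsum_eq_single i fun j hj => by rw [lp.single_apply_ne 2 i _ hj, zero_mul],
    lp.single_apply_self, one_mul]

theorem single_mem_OmDom {i : ℕ} (hi : Memℓp (ω i) 2) : lp.single 2 i (1 : ℂ) ∈ OmDom ω := by
  refine ⟨fun k => summable_of_ne_finset_zero (s := {i}) fun j hj => ?_, OmF_single ω i ▸ hi⟩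
  rw [lp.single_apply_ne 2 i _ (by simpa using hj), zero_mul]

theorem finSupp_le_OmDom (hrow : ∀ i, Memℓp (ω i) 2) : finSupp ≤ OmDom ω :=
  Submodule.span_le.2 <| Set.range_subset_iff.2 fun i => single_mem_OmDom (hrow i)

theorem le_OmegaOp_of_apply (hcol : ∀ k, Memℓp (fun i => ω i k) 2) {S : L2 →ₗ.[ℂ] L2}
    (hS : ∀ y : S.domain, ⇑(S y) = OmF ω y) : S ≤ OmegaOp ω := by
  refine ⟨fun y hy => ⟨fun k => summable_mul_of_memℓp_two (lp.memℓp y) (hcol k), ?_⟩,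
    fun x y hxy => lp.ext ?_⟩
  · exact hS ⟨y, hy⟩ ▸ lp.memℓp (S ⟨y, hy⟩)
  · rw [hS x, hxy]
    rfl

theorem inner_domRestrict_finSupp_single {i : ℕ} (x : ((OmegaOp ω).domRestrict finSupp).domain)
    (hx : (x : L2) = lp.single 2 i 1) (y : L2) :
    ⟪(OmegaOp ω).domRestrict finSupp x, y⟫_ℂ = OmF (fun i k => conj (ω k i)) y i := by
  have hΩx : ⇑((OmegaOp ω).domRestrict finSupp x) = ω i := by
    change OmF ω x = ω i
    rw [hx, OmF_single]
  rw [lp.inner_eq_tsum, hΩx, OmF]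
  exact tsum_congr fun k => RCLike.inner_apply _ _

section domRestrict

variable (hrow : ∀ i, Memℓp (ω i) 2)
include hrow

theorem domain_domRestrict_finSupp : ((OmegaOp ω).domRestrict finSupp).domain = finSupp :=
  inf_eq_left.2 (finSupp_le_OmDom hrow)

theorem dense_domain_domRestrict_finSupp :
    Dense (((OmegaOp ω).domRestrict finSupp).domain : Set L2) := by
  rw [domain_domRestrict_finSupp hrow]
  exact dense_finSupp

theorem isFormalAdjoint_domRestrict_finSupp :
    ((OmegaOp ω).domRestrict finSupp).IsFormalAdjoint (OmegaOp fun i k => conj (ω k i)) := by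
  refine LinearPMap.isFormalAdjoint_of_domain_eq_span (domain_domRestrict_finSupp hrow)
    fun x ⟨i, hx⟩ y => ?_
  rw [inner_domRestrict_finSupp_single x hx.symm, ← hx, inner_single_one_left]
  rfl

theorem adjoint_domRestrict_finSupp :
    ((OmegaOp ω).domRestrict finSupp)† = OmegaOp fun i k => conj (ω k i) := by
  have hdense := dense_domain_domRestrict_finSupp hrow
  refine le_antisymm (le_OmegaOp_of_apply (ω := fun i k => conj (ω k i))
    (fun k => (hrow k).star_mem) fun y => ?_)
    ((isFormalAdjoint_domRestrict_finSupp hrow).le_adjoint hdense)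
  funext i
  have hi : lp.single 2 i (1 : ℂ) ∈ ((OmegaOp ω).domRestrict finSupp).domain :=
    ⟨Submodule.subset_span ⟨i, rfl⟩, single_mem_OmDom (hrow i)⟩
  rw [← inner_single_one_left, ← inner_domRestrict_finSupp_single ⟨_, hi⟩ rfl]
  exact ((LinearPMap.adjoint_isFormalAdjoint hdense).symm ⟨_, hi⟩ y).symm

end domRestrict

/-- If every row of the weighted adjacency matrix `ω` is square-summable
(`∑_k |ω i k|² < ∞` for every `i`), then the weighted adjacency operator `Ω` is densely
defined, the adjoint of its restriction `Ω₀` to the finitely supported sequences equals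
`Γ` (so in particular `Ω* ⊆ Ω₀* = Γ`), and `Γ` is a closed operator. Here
`Γ = OmegaOp (fun i k => conj (ω k i))`, i.e. `(Γ v) k = ∑' i, v i * conj (ω k i)`. -/
theorem stmt_0 (ω : ℕ → ℕ → ℂ)
    (h : ∀ i : ℕ, Summable fun k => ‖ω i k‖ ^ 2) :
    Dense ((OmegaOp ω).domain : Set L2) ∧
    ((OmegaOp ω).domRestrict finSupp).adjoint = OmegaOp (fun i k => (starRingEnd ℂ) (ω k i)) ∧
    (OmegaOp ω).adjoint ≤ ((OmegaOp ω).domRestrict finSupp).adjoint ∧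
    (OmegaOp (fun i k => (starRingEnd ℂ) (ω k i))).IsClosed := by
  have hrow : ∀ i, Memℓp (ω i) 2 := fun i => memℓp_two_of_summable_sq (h i)
  have hdense := dense_domain_domRestrict_finSupp hrow
  have hadjoint := adjoint_domRestrict_finSupp hrow
  exact ⟨dense_finSupp.mono (finSupp_le_OmDom hrow), hadjoint,
    LinearPMap.adjoint_le_adjoint_of_le hdense LinearPMap.domRestrict_le,
    hadjoint ▸ LinearPMap.adjoint_isClosed hdense⟩
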